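/- Fix ℏ > 0 and let Φ : ℝ → ℝ be a polynomial. On C^∞(ℝ², ℂ) with coordinates (x', p') define the operators q̂ = x'· + (iℏ/2)∂_{p'}, p̂ = p'· − (iℏ/2)∂_{x'}, and Â = −∑_{n≥1} (1/(2n+1)!) (−1)^n (ℏ/2)^{2n} Φ^{(2n+1)}(x') ∂_{p'}^{2n+1} (a finite sum since Φ is a polynomial). Then: (i) [Â, q̂] = 0; (ii) [Â, p̂] = −∑_{n≥2} (1/n!) (iℏ/2)^n Φ^{(n+1)}(x') ∂_{p'}^{n} (again a finite sum); (iii) [Â, [Â, p̂]] = 0. Consequently, by the Hadamard formula exp(ad_Â) = 1 + ad_Â (which terminates by (iii)), e^{Â} p̂ e^{−Â} = p'· − (iℏ/2)∂_{x'} − ∑_{n≥2} (1/n!) (iℏ/2)^n Φ^{(n+1)}(x') ∂_{p'}^{n}. -/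

import Mathlib

open Complex Polynomial

/-- The partial derivative `∂_{x'}` on functions ℝ² → ℂ (coordinates `(x',p')`). -/
noncomputable def pdx (f : ℝ × ℝ → ℂ) : ℝ × ℝ → ℂ := fun z => fderiv ℝ f z (1, 0)

/-- The partial derivative `∂_{p'}` on functions ℝ² → ℂ (coordinates `(x',p')`). -/
noncomputable def pdp (f : ℝ × ℝ → ℂ) : ℝ × ℝ → ℂ := fun z => fderiv ℝ f z (0, 1)

/-- `q̂ = x'· + (iℏ/2)∂_{p'}`. -/
noncomputable def qop (ℏ : ℝ) (f : ℝ × ℝ → ℂ) : ℝ × ℝ → ℂ := fun z =>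
  (z.1 : ℂ) * f z + (Complex.I * (ℏ : ℂ) / 2) * pdp f z

/-- `p̂ = p'· − (iℏ/2)∂_{x'}`. -/
noncomputable def pop (ℏ : ℝ) (f : ℝ × ℝ → ℂ) : ℝ × ℝ → ℂ := fun z =>
  (z.2 : ℂ) * f z - (Complex.I * (ℏ : ℂ) / 2) * pdx f z

/-- `Â = −∑_{n≥1} (1/(2n+1)!)(−1)^n (ℏ/2)^{2n} Φ^{(2n+1)}(x') ∂_{p'}^{2n+1}`.
Since `Φ` is a polynomial, `Φ^{(2n+1)} = 0` once `2n+1 > deg Φ`, so the sum below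
over `1 ≤ n ≤ natDegree Φ` contains all the (finitely many) nonzero terms. -/
noncomputable def Aop (ℏ : ℝ) (Φ : Polynomial ℝ) (f : ℝ × ℝ → ℂ) : ℝ × ℝ → ℂ := fun z =>
  -∑ n ∈ Finset.Icc 1 Φ.natDegree,
    (((2 * n + 1).factorial : ℂ))⁻¹ * (-1 : ℂ) ^ n * (((ℏ / 2 : ℝ)) : ℂ) ^ (2 * n) *
      (((Polynomial.derivative^[2 * n + 1] Φ).eval z.1 : ℝ) : ℂ) * (pdp^[2 * n + 1] f) z

/-- `[Â,p̂] = −∑_{n≥2} (1/n!)(iℏ/2)^n Φ^{(n+1)}(x') ∂_{p'}^n`, again a finite sum: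
all terms with `n + 1 > deg Φ` vanish, so `2 ≤ n ≤ natDegree Φ` suffices. -/
noncomputable def Bop (ℏ : ℝ) (Φ : Polynomial ℝ) (f : ℝ × ℝ → ℂ) : ℝ × ℝ → ℂ := fun z =>
  -∑ n ∈ Finset.Icc 2 Φ.natDegree,
    ((n.factorial : ℂ))⁻¹ * (Complex.I * (ℏ : ℂ) / 2) ^ n *
      (((Polynomial.derivative^[n + 1] Φ).eval z.1 : ℝ) : ℂ) * (pdp^[n] f) z

variable {f g : ℝ × ℝ → ℂ}

lemma contDiff_pdp {f : ℝ × ℝ → ℂ} (hf : ContDiff ℝ (⊤ : ℕ∞) f) : ContDiff ℝ (⊤ : ℕ∞) (pdp f) :=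
  (hf.fderiv_right (by simp)).clm_apply contDiff_const

lemma contDiff_pdx {f : ℝ × ℝ → ℂ} (hf : ContDiff ℝ (⊤ : ℕ∞) f) : ContDiff ℝ (⊤ : ℕ∞) (pdx f) :=
  (hf.fderiv_right (by simp)).clm_apply contDiff_const

lemma contDiff_pdp_iter {f : ℝ × ℝ → ℂ} (hf : ContDiff ℝ (⊤ : ℕ∞) f) (k : ℕ) :
    ContDiff ℝ (⊤ : ℕ∞) (pdp^[k] f) := by
  induction k generalizing f with
  | zero => exact hf
  | succ k ih => rw [Function.iterate_succ_apply]; exact ih (contDiff_pdp hf)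


lemma dAt (hf : ContDiff ℝ (⊤ : ℕ∞) f) (z : ℝ × ℝ) : DifferentiableAt ℝ f z :=
  hf.differentiable (by simp) z

lemma contDiff_eval (P : Polynomial ℝ) : ContDiff ℝ (⊤ : ℕ∞) (fun x : ℝ => P.eval x) := by
  induction P using Polynomial.induction_on' with
  | add p q hp hq => simpa using hp.add hq
  | monomial n a => simpa [Polynomial.eval_monomial] using
      (contDiff_const (c := a)).mul (contDiff_id.pow n)

lemma contDiff_PC (P : Polynomial ℝ) :
    ContDiff ℝ (⊤ : ℕ∞) (fun w : ℝ × ℝ => ((P.eval w.1 : ℝ) : ℂ)) :=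
  Complex.ofRealCLM.contDiff.comp ((contDiff_eval P).comp contDiff_fst)

lemma hasFDerivAt_PC (P : Polynomial ℝ) (z : ℝ × ℝ) :
    HasFDerivAt (fun w : ℝ × ℝ => ((P.eval w.1 : ℝ) : ℂ))
      (Complex.ofRealCLM.comp ((P.derivative.eval z.1) • ContinuousLinearMap.fst ℝ ℝ ℝ)) z := by
  have h1 : HasFDerivAt (Prod.fst : ℝ × ℝ → ℝ) (ContinuousLinearMap.fst ℝ ℝ ℝ) z :=
    hasFDerivAt_fst
  exact Complex.ofRealCLM.hasFDerivAt.comp z ((P.hasDerivAt z.1).comp_hasFDerivAt z h1)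

lemma fderiv_PC (P : Polynomial ℝ) (z : ℝ × ℝ) (v : ℝ × ℝ) :
    fderiv ℝ (fun w : ℝ × ℝ => ((P.eval w.1 : ℝ) : ℂ)) z v
      = ((P.derivative.eval z.1 : ℝ) : ℂ) * v.1 := by
  rw [(hasFDerivAt_PC P z).fderiv]; simp [mul_comm]

lemma fderiv_sndC (z : ℝ × ℝ) (v : ℝ × ℝ) :
    fderiv ℝ (fun w : ℝ × ℝ => ((w.2 : ℝ) : ℂ)) z v = (v.2 : ℂ) := by
  have h1 : HasFDerivAt (Prod.snd : ℝ × ℝ → ℝ) (ContinuousLinearMap.snd ℝ ℝ ℝ) z :=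
    hasFDerivAt_snd
  have H : HasFDerivAt (fun w : ℝ × ℝ => ((w.2 : ℝ) : ℂ))
      (Complex.ofRealCLM.comp (ContinuousLinearMap.snd ℝ ℝ ℝ)) z :=
    Complex.ofRealCLM.hasFDerivAt.comp z h1
  rw [H.fderiv]; simp

lemma contDiff_sndC : ContDiff ℝ (⊤ : ℕ∞) (fun w : ℝ × ℝ => ((w.2 : ℝ) : ℂ)) :=
  Complex.ofRealCLM.contDiff.comp contDiff_snd

-- product with a polynomial in x'
lemma pdp_PC_mul (P : Polynomial ℝ) (hf : ContDiff ℝ (⊤ : ℕ∞) f) :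
    pdp (fun z => ((P.eval z.1 : ℝ) : ℂ) * f z)
      = fun z => ((P.eval z.1 : ℝ) : ℂ) * pdp f z := by
  funext z
  simp only [pdp]
  rw [fderiv_fun_mul (dAt (contDiff_PC P) z) (dAt hf z)]
  simp [fderiv_PC, smul_eq_mul, mul_comm]

lemma pdx_PC_mul (P : Polynomial ℝ) (hf : ContDiff ℝ (⊤ : ℕ∞) f) :
    pdx (fun z => ((P.eval z.1 : ℝ) : ℂ) * f z)
      = fun z => ((P.derivative.eval z.1 : ℝ) : ℂ) * f z
          + ((P.eval z.1 : ℝ) : ℂ) * pdx f z := by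
  funext z
  simp only [pdx]
  rw [fderiv_fun_mul (dAt (contDiff_PC P) z) (dAt hf z)]
  simp [fderiv_PC, smul_eq_mul]
  ring

lemma pdp_snd_mul (hf : ContDiff ℝ (⊤ : ℕ∞) f) :
    pdp (fun z => ((z.2 : ℝ) : ℂ) * f z)
      = fun z => f z + ((z.2 : ℝ) : ℂ) * pdp f z := by
  funext z
  simp only [pdp]
  rw [fderiv_fun_mul (dAt contDiff_sndC z) (dAt hf z)]
  simp [fderiv_sndC, smul_eq_mul]
  ring

lemma fderiv_eval_apply (hf : ContDiff ℝ (⊤ : ℕ∞) f) (z u v : ℝ × ℝ) :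
    fderiv ℝ (fun w => fderiv ℝ f w v) z u = fderiv ℝ (fderiv ℝ f) z u v := by
  have hc : DifferentiableAt ℝ (fderiv ℝ f) z :=
    ((hf.fderiv_right (m := 1) (by rw [one_add_one_eq_two, ← WithTop.coe_ofNat]; exact WithTop.coe_le_coe.mpr le_top)).differentiable one_ne_zero) z
  rw [fderiv_clm_apply hc (differentiableAt_const v)]
  simp

lemma pdx_pdp (hf : ContDiff ℝ (⊤ : ℕ∞) f) : pdx (pdp f) = pdp (pdx f) := by
  funext z
  have hs : IsSymmSndFDerivAt ℝ f z := hf.contDiffAt.isSymmSndFDerivAt (by rw [minSmoothness_of_isRCLikeNormedField, ← WithTop.coe_ofNat]; exact WithTop.coe_le_coe.mpr le_top)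
  show fderiv ℝ (fun w => fderiv ℝ f w (0, 1)) z (1, 0)
      = fderiv ℝ (fun w => fderiv ℝ f w (1, 0)) z (0, 1)
  rw [fderiv_eval_apply hf, fderiv_eval_apply hf, hs]

lemma pdx_pdp_iter (hf : ContDiff ℝ (⊤ : ℕ∞) f) (k : ℕ) :
    pdx (pdp^[k] f) = pdp^[k] (pdx f) := by
  induction k generalizing f with
  | zero => rfl
  | succ k ih =>
    rw [Function.iterate_succ_apply, Function.iterate_succ_apply,
      ih (contDiff_pdp hf), pdx_pdp hf]


lemma pdp_add (hf : ContDiff ℝ (⊤ : ℕ∞) f) (hg : ContDiff ℝ (⊤ : ℕ∞) g) :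
    pdp (fun z => f z + g z) = fun z => pdp f z + pdp g z := by
  funext z
  simp only [pdp]
  rw [fderiv_fun_add (dAt hf z) (dAt hg z)]
  simp

lemma pdp_neg : pdp (fun z => -f z) = fun z => -pdp f z := by
  funext z; simp only [pdp, fderiv_neg]; simp

lemma pdp_const_mul (c : ℂ) (hf : ContDiff ℝ (⊤ : ℕ∞) f) :
    pdp (fun z => c * f z) = fun z => c * pdp f z := by
  funext z
  simp only [pdp]
  rw [fderiv_const_mul (dAt hf z)]
  simp

lemma pdp_sum {ι : Type*} (s : Finset ι) (F : ι → ℝ × ℝ → ℂ)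
    (hF : ∀ i ∈ s, ContDiff ℝ (⊤ : ℕ∞) (F i)) :
    pdp (fun z => ∑ i ∈ s, F i z) = fun z => ∑ i ∈ s, pdp (F i) z := by
  funext z
  simp only [pdp]
  rw [fderiv_fun_sum (fun i hi => dAt (hF i hi) z)]
  simp

lemma pdx_neg : pdx (fun z => -f z) = fun z => -pdx f z := by
  funext z; simp only [pdx, fderiv_neg]; simp

lemma pdx_const_mul (c : ℂ) (hf : ContDiff ℝ (⊤ : ℕ∞) f) :
    pdx (fun z => c * f z) = fun z => c * pdx f z := by
  funext z
  simp only [pdx]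
  rw [fderiv_const_mul (dAt hf z)]
  simp

lemma pdx_sum {ι : Type*} (s : Finset ι) (F : ι → ℝ × ℝ → ℂ)
    (hF : ∀ i ∈ s, ContDiff ℝ (⊤ : ℕ∞) (F i)) :
    pdx (fun z => ∑ i ∈ s, F i z) = fun z => ∑ i ∈ s, pdx (F i) z := by
  funext z
  simp only [pdx]
  rw [fderiv_fun_sum (fun i hi => dAt (hF i hi) z)]
  simp

-- iterated lemmas
lemma pdp_iter_add (hf : ContDiff ℝ (⊤ : ℕ∞) f) (hg : ContDiff ℝ (⊤ : ℕ∞) g) (k : ℕ) :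
    pdp^[k] (fun z => f z + g z) = fun z => pdp^[k] f z + pdp^[k] g z := by
  induction k generalizing f g with
  | zero => rfl
  | succ k ih =>
    rw [Function.iterate_succ_apply, Function.iterate_succ_apply,
      Function.iterate_succ_apply, pdp_add hf hg, ih (contDiff_pdp hf) (contDiff_pdp hg)]

lemma pdp_iter_const_mul (c : ℂ) (hf : ContDiff ℝ (⊤ : ℕ∞) f) (k : ℕ) :
    pdp^[k] (fun z => c * f z) = fun z => c * pdp^[k] f z := by
  induction k generalizing f with
  | zero => rfl
  | succ k ih =>
    rw [Function.iterate_succ_apply, Function.iterate_succ_apply,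
      pdp_const_mul c hf, ih (contDiff_pdp hf)]

lemma pdp_iter_PC_mul (P : Polynomial ℝ) (hf : ContDiff ℝ (⊤ : ℕ∞) f) (k : ℕ) :
    pdp^[k] (fun z => ((P.eval z.1 : ℝ) : ℂ) * f z)
      = fun z => ((P.eval z.1 : ℝ) : ℂ) * pdp^[k] f z := by
  induction k generalizing f with
  | zero => rfl
  | succ k ih =>
    rw [Function.iterate_succ_apply, Function.iterate_succ_apply,
      pdp_PC_mul P hf, ih (contDiff_pdp hf)]

lemma pdp_iter_snd_mul (hf : ContDiff ℝ (⊤ : ℕ∞) f) (k : ℕ) :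
    pdp^[k] (fun z => ((z.2 : ℝ) : ℂ) * f z)
      = fun z => ((z.2 : ℝ) : ℂ) * pdp^[k] f z + (k : ℂ) * pdp^[k - 1] f z := by
  induction k generalizing f with
  | zero => funext z; simp
  | succ k ih =>
    rw [Function.iterate_succ_apply, pdp_snd_mul hf,
      pdp_iter_add hf (contDiff_sndC.mul (contDiff_pdp hf)) k,
      ih (contDiff_pdp hf)]
    funext z
    rw [← Function.iterate_succ_apply pdp k f]
    cases k with
    | zero => simp; ring
    | succ m =>
      rw [show m + 1 - 1 = m from rfl, ← Function.iterate_succ_apply pdp m f]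
      push_cast
      ring

lemma pdp_iter_neg (k : ℕ) : pdp^[k] (fun z => -f z) = fun z => -pdp^[k] f z := by
  induction k generalizing f with
  | zero => rfl
  | succ k ih =>
    rw [Function.iterate_succ_apply, Function.iterate_succ_apply, pdp_neg, ih]

lemma pdp_iter_sum {ι : Type*} (s : Finset ι) (F : ι → ℝ × ℝ → ℂ)
    (hF : ∀ i ∈ s, ContDiff ℝ (⊤ : ℕ∞) (F i)) (k : ℕ) :
    pdp^[k] (fun z => ∑ i ∈ s, F i z) = fun z => ∑ i ∈ s, pdp^[k] (F i) z := by
  induction k generalizing F with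
  | zero => rfl
  | succ k ih =>
    rw [Function.iterate_succ_apply, pdp_sum s F hF,
      ih (fun i => pdp (F i)) (fun i hi => contDiff_pdp (hF i hi))]
    simp [Function.iterate_succ_apply]

lemma contDiff_fstC : ContDiff ℝ (⊤ : ℕ∞) (fun w : ℝ × ℝ => ((w.1 : ℝ) : ℂ)) :=
  Complex.ofRealCLM.contDiff.comp contDiff_fst

lemma pdp_iter_fst_mul (hf : ContDiff ℝ (⊤ : ℕ∞) f) (k : ℕ) :
    pdp^[k] (fun z => ((z.1 : ℝ) : ℂ) * f z)
      = fun z => ((z.1 : ℝ) : ℂ) * pdp^[k] f z := by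
  have h := pdp_iter_PC_mul (Polynomial.X : Polynomial ℝ) hf k
  simpa using h

lemma pdp_iter_cPC_mul (c : ℂ) (P : Polynomial ℝ) (hf : ContDiff ℝ (⊤ : ℕ∞) f) (k : ℕ) :
    pdp^[k] (fun z => c * ((P.eval z.1 : ℝ) : ℂ) * f z)
      = fun z => c * ((P.eval z.1 : ℝ) : ℂ) * pdp^[k] f z := by
  have h1 : (fun z : ℝ × ℝ => c * ((P.eval z.1 : ℝ) : ℂ) * f z)
      = fun z => c * (((P.eval z.1 : ℝ) : ℂ) * f z) := by funext z; ring
  rw [h1, pdp_iter_const_mul c ((contDiff_PC P).mul hf) k, pdp_iter_PC_mul P hf k]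
  funext z; ring

lemma pdx_cPC_mul (c : ℂ) (P : Polynomial ℝ) (hf : ContDiff ℝ (⊤ : ℕ∞) f) :
    pdx (fun z => c * ((P.eval z.1 : ℝ) : ℂ) * f z)
      = fun z => c * ((P.derivative.eval z.1 : ℝ) : ℂ) * f z
          + c * ((P.eval z.1 : ℝ) : ℂ) * pdx f z := by
  have h1 : (fun z : ℝ × ℝ => c * ((P.eval z.1 : ℝ) : ℂ) * f z)
      = fun z => c * (((P.eval z.1 : ℝ) : ℂ) * f z) := by funext z; ring
  rw [h1, pdx_const_mul c ((contDiff_PC P).mul hf), pdx_PC_mul P hf]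
  funext z; ring





/-- generic operator: finite sum of (coefficient × polynomial in x' × power of ∂ₚ) -/
noncomputable def SOp (s : Finset ℕ) (c : ℕ → ℂ) (Q : ℕ → Polynomial ℝ) (e : ℕ → ℕ)
    (f : ℝ × ℝ → ℂ) : ℝ × ℝ → ℂ := fun z =>
  -∑ n ∈ s, c n * (((Q n).eval z.1 : ℝ) : ℂ) * pdp^[e n] f z

lemma Aop_eq_SOp (ℏ : ℝ) (Φ : Polynomial ℝ) (f : ℝ × ℝ → ℂ) :
    Aop ℏ Φ f = SOp (Finset.Icc 1 Φ.natDegree)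
      (fun n => (((2 * n + 1).factorial : ℂ))⁻¹ * (-1 : ℂ) ^ n * (((ℏ / 2 : ℝ)) : ℂ) ^ (2 * n))
      (fun n => Polynomial.derivative^[2 * n + 1] Φ) (fun n => 2 * n + 1) f := rfl

lemma Bop_eq_SOp (ℏ : ℝ) (Φ : Polynomial ℝ) (f : ℝ × ℝ → ℂ) :
    Bop ℏ Φ f = SOp (Finset.Icc 2 Φ.natDegree)
      (fun n => ((n.factorial : ℂ))⁻¹ * (Complex.I * (ℏ : ℂ) / 2) ^ n)
      (fun n => Polynomial.derivative^[n + 1] Φ) (fun n => n) f := rfl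

variable {s : Finset ℕ} {c : ℕ → ℂ} {Q : ℕ → Polynomial ℝ} {e : ℕ → ℕ}

lemma contDiff_SOp (hf : ContDiff ℝ (⊤ : ℕ∞) f) : ContDiff ℝ (⊤ : ℕ∞) (SOp s c Q e f) := by
  unfold SOp
  apply ContDiff.neg
  apply ContDiff.sum
  intro i _
  exact (contDiff_const.mul (contDiff_PC (Q i))).mul (contDiff_pdp_iter hf (e i))

lemma pdp_iter_SOp (hf : ContDiff ℝ (⊤ : ℕ∞) f) (k : ℕ) :
    pdp^[k] (SOp s c Q e f) = SOp s c Q (fun n => k + e n) f := by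
  unfold SOp
  have h1 : (fun z => -∑ n ∈ s, c n * (((Q n).eval z.1 : ℝ) : ℂ) * pdp^[e n] f z)
      = fun z => -(fun z => ∑ n ∈ s, c n * (((Q n).eval z.1 : ℝ) : ℂ) * pdp^[e n] f z) z := rfl
  rw [h1, pdp_iter_neg, pdp_iter_sum s _
    (fun i _ => (contDiff_const.mul (contDiff_PC (Q i))).mul (contDiff_pdp_iter hf (e i))) k]
  funext z
  congr 1
  apply Finset.sum_congr rfl
  intro i _
  rw [pdp_iter_cPC_mul (c i) (Q i) (contDiff_pdp_iter hf (e i)) k,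
    ← Function.iterate_add_apply pdp k (e i) f]

lemma pdx_SOp (hf : ContDiff ℝ (⊤ : ℕ∞) f) :
    pdx (SOp s c Q e f) = fun z =>
      SOp s c (fun n => (Q n).derivative) e f z + SOp s c Q e (pdx f) z := by
  unfold SOp
  have h1 : (fun z => -∑ n ∈ s, c n * (((Q n).eval z.1 : ℝ) : ℂ) * pdp^[e n] f z)
      = fun z => -(fun z => ∑ n ∈ s, c n * (((Q n).eval z.1 : ℝ) : ℂ) * pdp^[e n] f z) z := rfl
  rw [h1, pdx_neg, pdx_sum s _
    (fun i _ => (contDiff_const.mul (contDiff_PC (Q i))).mul (contDiff_pdp_iter hf (e i)))]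
  funext z
  have h2 : ∀ i ∈ s, pdx (fun z => c i * (((Q i).eval z.1 : ℝ) : ℂ) * pdp^[e i] f z) z
      = c i * ((((Q i).derivative.eval z.1 : ℝ)) : ℂ) * pdp^[e i] f z
        + c i * (((Q i).eval z.1 : ℝ) : ℂ) * pdp^[e i] (pdx f) z := by
    intro i _
    rw [pdx_cPC_mul (c i) (Q i) (contDiff_pdp_iter hf (e i)), pdx_pdp_iter hf (e i)]
  beta_reduce
  rw [Finset.sum_congr rfl h2, Finset.sum_add_distrib]
  ring

lemma SOp_add (hf : ContDiff ℝ (⊤ : ℕ∞) f) (hg : ContDiff ℝ (⊤ : ℕ∞) g) :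
    SOp s c Q e (fun z => f z + g z)
      = fun z => SOp s c Q e f z + SOp s c Q e g z := by
  unfold SOp
  funext z
  have h2 : ∀ i ∈ s, c i * (((Q i).eval z.1 : ℝ) : ℂ) * pdp^[e i] (fun z => f z + g z) z
      = c i * (((Q i).eval z.1 : ℝ) : ℂ) * pdp^[e i] f z
        + c i * (((Q i).eval z.1 : ℝ) : ℂ) * pdp^[e i] g z := by
    intro i _
    rw [pdp_iter_add hf hg (e i)]
    ring
  rw [Finset.sum_congr rfl h2, Finset.sum_add_distrib]
  ring

lemma contDiff_pop (ℏ : ℝ) (hf : ContDiff ℝ (⊤ : ℕ∞) f) : ContDiff ℝ (⊤ : ℕ∞) (pop ℏ f) := by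
  unfold pop
  exact (contDiff_sndC.mul hf).sub (contDiff_const.mul (contDiff_pdx hf))

lemma contDiff_Aop (ℏ : ℝ) (Φ : Polynomial ℝ) (hf : ContDiff ℝ (⊤ : ℕ∞) f) :
    ContDiff ℝ (⊤ : ℕ∞) (Aop ℏ Φ f) := by
  rw [Aop_eq_SOp]; exact contDiff_SOp hf

lemma contDiff_Bop (ℏ : ℝ) (Φ : Polynomial ℝ) (hf : ContDiff ℝ (⊤ : ℕ∞) f) :
    ContDiff ℝ (⊤ : ℕ∞) (Bop ℏ Φ f) := by
  rw [Bop_eq_SOp]; exact contDiff_SOp hf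

lemma pdp_iter_qop (ℏ : ℝ) (hf : ContDiff ℝ (⊤ : ℕ∞) f) (k : ℕ) :
    pdp^[k] (qop ℏ f)
      = fun z => (z.1 : ℂ) * pdp^[k] f z
          + (Complex.I * (ℏ : ℂ) / 2) * pdp^[k + 1] f z := by
  unfold qop
  rw [pdp_iter_add (contDiff_fstC.mul hf) (contDiff_const.mul (contDiff_pdp hf)) k,
    pdp_iter_fst_mul hf k, pdp_iter_const_mul _ (contDiff_pdp hf) k]
  funext z
  rw [← Function.iterate_succ_apply pdp k f]

lemma pdp_iter_pop (ℏ : ℝ) (hf : ContDiff ℝ (⊤ : ℕ∞) f) (k : ℕ) :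
    pdp^[k + 1] (pop ℏ f)
      = fun z => (z.2 : ℂ) * pdp^[k + 1] f z + ((k : ℂ) + 1) * pdp^[k] f z
          + (-(Complex.I * (ℏ : ℂ) / 2)) * pdp^[k + 1] (pdx f) z := by
  have h0 : pop ℏ f = fun z => ((z.2 : ℝ) : ℂ) * f z
      + (-(Complex.I * (ℏ : ℂ) / 2)) * pdx f z := by
    funext z; unfold pop; ring
  rw [h0, pdp_iter_add (contDiff_sndC.mul hf) (contDiff_const.mul (contDiff_pdx hf)) (k + 1),
    pdp_iter_snd_mul hf (k + 1), pdp_iter_const_mul _ (contDiff_pdx hf) (k + 1)]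
  funext z
  rw [Nat.add_sub_cancel]
  push_cast
  ring

lemma SOp_SOp {s₂ : Finset ℕ} {c₂ : ℕ → ℂ} {Q₂ : ℕ → Polynomial ℝ} {e₂ : ℕ → ℕ}
    (hf : ContDiff ℝ (⊤ : ℕ∞) f) :
    SOp s c Q e (SOp s₂ c₂ Q₂ e₂ f)
      = fun z => ∑ n ∈ s, ∑ m ∈ s₂,
          c n * c₂ m * (((Q n).eval z.1 : ℝ) : ℂ) * (((Q₂ m).eval z.1 : ℝ) : ℂ)
            * pdp^[e n + e₂ m] f z := by
  funext z
  have h2 : ∀ i ∈ s, c i * (((Q i).eval z.1 : ℝ) : ℂ) * pdp^[e i] (SOp s₂ c₂ Q₂ e₂ f) z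
      = -∑ m ∈ s₂, c i * c₂ m * (((Q i).eval z.1 : ℝ) : ℂ) * (((Q₂ m).eval z.1 : ℝ) : ℂ)
          * pdp^[e i + e₂ m] f z := by
    intro i _
    rw [pdp_iter_SOp hf (e i)]
    unfold SOp
    rw [mul_neg, Finset.mul_sum]
    congr 1
    apply Finset.sum_congr rfl
    intro m _
    beta_reduce
    ring
  show -∑ n ∈ s, c n * (((Q n).eval z.1 : ℝ) : ℂ) * pdp^[e n] (SOp s₂ c₂ Q₂ e₂ f) z
      = ∑ n ∈ s, ∑ m ∈ s₂,
          c n * c₂ m * (((Q n).eval z.1 : ℝ) : ℂ) * (((Q₂ m).eval z.1 : ℝ) : ℂ)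
            * pdp^[e n + e₂ m] f z
  rw [Finset.sum_congr rfl h2, ← Finset.sum_neg_distrib]
  simp only [neg_neg]

lemma pair_sum (b : ℕ → ℂ) (d : ℕ) :
    ∑ m ∈ Finset.Icc 2 (2 * d + 1), b m
      = ∑ n ∈ Finset.Icc 1 d, (b (2 * n) + b (2 * n + 1)) := by
  induction d with
  | zero => simp
  | succ d ih =>
    rw [show 2 * (d + 1) + 1 = ((2 * d + 1) + 1) + 1 from by ring,
      Finset.sum_Icc_succ_top (by omega), Finset.sum_Icc_succ_top (by omega), ih,
      Finset.sum_Icc_succ_top (by omega : 1 ≤ d + 1),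
      show (2 * d + 1) + 1 = 2 * (d + 1) from by ring,
      show 2 * (d + 1) + 1 = 2 * (d + 1) + 1 from rfl]
    ring

lemma Bop_expand (ℏ : ℝ) (Φ : Polynomial ℝ) (f : ℝ × ℝ → ℂ) (z : ℝ × ℝ) :
    Bop ℏ Φ f z = -∑ n ∈ Finset.Icc 1 Φ.natDegree,
      ((((2 * n).factorial : ℂ))⁻¹ * (Complex.I * (ℏ : ℂ) / 2) ^ (2 * n) *
          (((Polynomial.derivative^[2 * n + 1] Φ).eval z.1 : ℝ) : ℂ) * pdp^[2 * n] f z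
        + (((2 * n + 1).factorial : ℂ))⁻¹ * (Complex.I * (ℏ : ℂ) / 2) ^ (2 * n + 1) *
          (((Polynomial.derivative^[2 * n + 1 + 1] Φ).eval z.1 : ℝ) : ℂ) * pdp^[2 * n + 1] f z) := by
  unfold Bop
  congr 1
  have hsub : Finset.Icc 2 Φ.natDegree ⊆ Finset.Icc 2 (2 * Φ.natDegree + 1) :=
    Finset.Icc_subset_Icc_right (by omega)
  rw [Finset.sum_subset hsub ?van]
  case van =>
    intro m hm hnm
    have hm' : Φ.natDegree < m + 1 := by
      simp only [Finset.mem_Icc] at hm hnm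
      omega
    rw [Polynomial.iterate_derivative_eq_zero hm']
    simp
  exact pair_sum _ Φ.natDegree

lemma coeffE (ℏ : ℝ) (n : ℕ) :
    (((2 * n + 1).factorial : ℂ))⁻¹ * (-1 : ℂ) ^ n * (((ℏ / 2 : ℝ)) : ℂ) ^ (2 * n)
        * (((2 * n : ℕ) : ℂ) + 1)
      = (((2 * n).factorial : ℂ))⁻¹ * (Complex.I * (ℏ : ℂ) / 2) ^ (2 * n) := by
  have hI : (Complex.I * (ℏ : ℂ) / 2) ^ (2 * n)
      = (-1 : ℂ) ^ n * (((ℏ / 2 : ℝ)) : ℂ) ^ (2 * n) := by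
    rw [Complex.ofReal_div, mul_div_assoc, mul_pow, pow_mul, Complex.I_sq]
    norm_num
  have h1 : (((2 * n : ℕ) : ℂ) + 1) ≠ 0 := by
    exact_mod_cast Nat.cast_ne_zero (R := ℂ).mpr (Nat.succ_ne_zero (2 * n))
  have key : (((2 * n + 1).factorial : ℂ))⁻¹ * (((2 * n : ℕ) : ℂ) + 1)
      = (((2 * n).factorial : ℂ))⁻¹ := by
    have hfac : (((2 * n + 1).factorial : ℕ) : ℂ)
        = (((2 * n : ℕ) : ℂ) + 1) * ((2 * n).factorial : ℂ) := by
      rw [Nat.factorial_succ]; push_cast; ring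
    rw [hfac, mul_inv, mul_comm (((2 * n : ℕ) : ℂ) + 1)⁻¹ _, mul_assoc,
      inv_mul_cancel₀ h1, mul_one]
  rw [hI]
  linear_combination ((-1 : ℂ) ^ n * (((ℏ / 2 : ℝ)) : ℂ) ^ (2 * n)) * key

lemma coeffO (ℏ : ℝ) (n : ℕ) :
    (Complex.I * (ℏ : ℂ) / 2) *
        ((((2 * n + 1).factorial : ℂ))⁻¹ * (-1 : ℂ) ^ n * (((ℏ / 2 : ℝ)) : ℂ) ^ (2 * n))
      = (((2 * n + 1).factorial : ℂ))⁻¹ * (Complex.I * (ℏ : ℂ) / 2) ^ (2 * n + 1) := by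
  have hI : (Complex.I * (ℏ : ℂ) / 2) ^ (2 * n)
      = (-1 : ℂ) ^ n * (((ℏ / 2 : ℝ)) : ℂ) ^ (2 * n) := by
    rw [Complex.ofReal_div, mul_div_assoc, mul_pow, pow_mul, Complex.I_sq]
    norm_num
  rw [pow_succ, hI]
  ring

lemma combine0 (S : Finset ℕ) (A B D : ℕ → ℂ) (x1 C : ℂ)
    (h : ∀ n ∈ S, -A n + x1 * B n + C * D n = 0) :
    (-∑ n ∈ S, A n) - (x1 * -∑ n ∈ S, B n + C * -∑ n ∈ S, D n) = 0 := by
  have hA : ∑ n ∈ S, A n = ∑ n ∈ S, (x1 * B n + C * D n) :=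
    Finset.sum_congr rfl (fun n hn => by linear_combination - h n hn)
  rw [hA]
  simp only [Finset.sum_add_distrib, ← Finset.mul_sum]
  ring

lemma combine2 (S : Finset ℕ) (A B D1 D2 E : ℕ → ℂ) (x2 C : ℂ)
    (h : ∀ n ∈ S, -A n + x2 * B n - C * (D1 n + D2 n) = -E n) :
    (-∑ n ∈ S, A n) - (x2 * -∑ n ∈ S, B n - C * (-∑ n ∈ S, D1 n + -∑ n ∈ S, D2 n))
      = -∑ n ∈ S, E n := by
  have hA : ∑ n ∈ S, E n = ∑ n ∈ S, (A n - x2 * B n + C * (D1 n + D2 n)) :=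
    Finset.sum_congr rfl (fun n hn => by linear_combination h n hn)
  rw [hA]
  simp only [Finset.sum_add_distrib, Finset.sum_sub_distrib, ← Finset.mul_sum]
  ring

lemma Aop_add (ℏ : ℝ) (Φ : Polynomial ℝ) (hf : ContDiff ℝ (⊤ : ℕ∞) f) (hg : ContDiff ℝ (⊤ : ℕ∞) g) :
    Aop ℏ Φ (fun z => f z + g z) = fun z => Aop ℏ Φ f z + Aop ℏ Φ g z := by
  simp only [Aop_eq_SOp]
  exact SOp_add hf hg

lemma comm1 (ℏ : ℝ) (Φ : Polynomial ℝ) (hf : ContDiff ℝ (⊤ : ℕ∞) f) (z : ℝ × ℝ) :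
    Aop ℏ Φ (qop ℏ f) z - qop ℏ (Aop ℏ Φ f) z = 0 := by
  show Aop ℏ Φ (qop ℏ f) z
      - ((z.1 : ℂ) * Aop ℏ Φ f z + (Complex.I * (ℏ : ℂ) / 2) * pdp (Aop ℏ Φ f) z) = 0
  rw [show pdp (Aop ℏ Φ f) = pdp^[1] (Aop ℏ Φ f) from rfl]
  simp only [Aop_eq_SOp]
  rw [pdp_iter_SOp hf 1]
  unfold SOp
  simp only [pdp_iter_qop ℏ hf]
  refine combine0 _ _ _ _ _ _ (fun n hn => ?_)
  have he : 2 * n + 1 + 1 = 1 + (2 * n + 1) := by omega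
  rw [he]
  ring

lemma comm2 (ℏ : ℝ) (Φ : Polynomial ℝ) (hf : ContDiff ℝ (⊤ : ℕ∞) f) (z : ℝ × ℝ) :
    Aop ℏ Φ (pop ℏ f) z - pop ℏ (Aop ℏ Φ f) z = Bop ℏ Φ f z := by
  show Aop ℏ Φ (pop ℏ f) z
      - ((z.2 : ℂ) * Aop ℏ Φ f z - (Complex.I * (ℏ : ℂ) / 2) * pdx (Aop ℏ Φ f) z)
    = Bop ℏ Φ f z
  rw [Bop_expand ℏ Φ f z]
  simp only [Aop_eq_SOp]
  rw [pdx_SOp hf]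
  beta_reduce
  unfold SOp
  simp only [pdp_iter_pop ℏ hf]
  refine combine2 _ _ _ _ _ _ _ _ (fun n hn => ?_)
  rw [show (2 * n + 1 + 1) = (2 * n + 1) + 1 from rfl,
    Function.iterate_succ_apply' Polynomial.derivative (2 * n + 1) Φ]
  have hE := coeffE ℏ n
  have hO := coeffO ℏ n
  linear_combination
    (-((((Polynomial.derivative^[2 * n + 1] Φ).eval z.1 : ℝ) : ℂ) * pdp^[2 * n] f z)) * hE
    + (-((((Polynomial.derivative (Polynomial.derivative^[2 * n + 1] Φ)).eval z.1 : ℝ) : ℂ)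
        * pdp^[2 * n + 1] f z)) * hO

lemma AB_comm (ℏ : ℝ) (Φ : Polynomial ℝ) (hf : ContDiff ℝ (⊤ : ℕ∞) f) (z : ℝ × ℝ) :
    Aop ℏ Φ (Bop ℏ Φ f) z = Bop ℏ Φ (Aop ℏ Φ f) z := by
  rw [Aop_eq_SOp, Bop_eq_SOp, Aop_eq_SOp, Bop_eq_SOp, SOp_SOp hf, SOp_SOp hf]
  beta_reduce
  rw [Finset.sum_comm]
  apply Finset.sum_congr rfl
  intro m hm
  apply Finset.sum_congr rfl
  intro n hn
  beta_reduce
  rw [show (2 * n + 1) + m = m + (2 * n + 1) from by omega]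
  ring

lemma comm3 (ℏ : ℝ) (Φ : Polynomial ℝ) (hf : ContDiff ℝ (⊤ : ℕ∞) f) (z : ℝ × ℝ) :
    Aop ℏ Φ (Aop ℏ Φ (pop ℏ f)) z - 2 * Aop ℏ Φ (pop ℏ (Aop ℏ Φ f)) z
      + pop ℏ (Aop ℏ Φ (Aop ℏ Φ f)) z = 0 := by
  have e1 : Aop ℏ Φ (pop ℏ f)
      = fun w => pop ℏ (Aop ℏ Φ f) w + Bop ℏ Φ f w := by
    funext w
    linear_combination comm2 ℏ Φ hf w
  rw [e1, Aop_add ℏ Φ (contDiff_pop ℏ (contDiff_Aop ℏ Φ hf)) (contDiff_Bop ℏ Φ hf)]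
  have e2 := comm2 ℏ Φ (contDiff_Aop ℏ Φ hf) z
  have e3 := AB_comm ℏ Φ hf z
  beta_reduce
  linear_combination e3 - e2

/-- For ℏ > 0 and a polynomial Φ, on C^∞(ℝ²,ℂ):
(i) `[Â,q̂] = 0`; (ii) `[Â,p̂] = −∑_{n≥2} (1/n!)(iℏ/2)^n Φ^{(n+1)}(x') ∂_{p'}^n`;
(iii) `[Â,[Â,p̂]] = 0`.  Consequently, by the Hadamard formula
`exp(ad_Â) = 1 + ad_Â` (which terminates by (iii)),
(iv) `e^Â p̂ e^{−Â} = p̂ + [Â,p̂] = p'· − (iℏ/2)∂_{x'} − ∑_{n≥2} (1/n!)(iℏ/2)^n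
Φ^{(n+1)}(x') ∂_{p'}^n`. -/
theorem gauge_commutators (ℏ : ℝ) (hℏ : 0 < ℏ) (Φ : Polynomial ℝ)
    (f : ℝ × ℝ → ℂ) (hf : ContDiff ℝ (⊤ : ℕ∞) f) :
    (∀ z, Aop ℏ Φ (qop ℏ f) z - qop ℏ (Aop ℏ Φ f) z = 0) ∧
    (∀ z, Aop ℏ Φ (pop ℏ f) z - pop ℏ (Aop ℏ Φ f) z = Bop ℏ Φ f z) ∧
    (∀ z, Aop ℏ Φ (Aop ℏ Φ (pop ℏ f)) z - 2 * Aop ℏ Φ (pop ℏ (Aop ℏ Φ f)) z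
        + pop ℏ (Aop ℏ Φ (Aop ℏ Φ f)) z = 0) ∧
    (∀ z, pop ℏ f z + (Aop ℏ Φ (pop ℏ f) z - pop ℏ (Aop ℏ Φ f) z)
        = (z.2 : ℂ) * f z - (Complex.I * (ℏ : ℂ) / 2) * pdx f z
          - ∑ n ∈ Finset.Icc 2 Φ.natDegree,
              ((n.factorial : ℂ))⁻¹ * (Complex.I * (ℏ : ℂ) / 2) ^ n *
                (((Polynomial.derivative^[n + 1] Φ).eval z.1 : ℝ) : ℂ) *
                  (pdp^[n] f) z) := by
  refine ⟨comm1 ℏ Φ hf, comm2 ℏ Φ hf, comm3 ℏ Φ hf, fun z => ?_⟩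
  rw [comm2 ℏ Φ hf z]
  show pop ℏ f z + Bop ℏ Φ f z = _
  unfold pop Bop
  ring
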